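/- Every 2-coloring of the edges of K_{2,2,3} (the complete tripartite graph with parts of sizes 2,2,3) contains a copy of J_3 = P_3 in color 1 or a copy of J_4 = K_4 minus an edge in color 2. That is, K_{2,2,3} edge-arrows (J_3, J_4). -/

import Mathlib

open SimpleGraph

/-- `Copies G F S`: `G` contains a copy of `F` all of whose vertices lie in `S`. -/
def Copies {α β : Type*} (G : SimpleGraph α) (F : SimpleGraph β) (S : Set α) : Prop :=
  ∃ f : β ↪ α, (∀ a b, F.Adj a b → G.Adj (f a) (f b)) ∧ ∀ a, f a ∈ S

/-- `G` vertex-arrows the family `F` of graphs. -/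
def VArrows {α : Type*} (G : SimpleGraph α) {r : ℕ} {β : Fin r → Type*}
    (F : ∀ i, SimpleGraph (β i)) : Prop :=
  ∀ C : α → Fin r, ∃ i, Copies G (F i) {v | C v = i}

/-- `G` vertex-arrows `(F1, F2)`. -/
def VArrows2 {α β γ : Type*} (G : SimpleGraph α) (F1 : SimpleGraph β) (F2 : SimpleGraph γ) :
    Prop :=
  ∀ C : α → Bool, Copies G F1 {v | C v = true} ∨ Copies G F2 {v | C v = false}

/-- `G` edge-arrows `(F1, F2)`: every red subgraph `R ≤ G` yields a red `F1` or a blue `F2`. -/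
def EArrows2 {α β γ : Type*} (G : SimpleGraph α) (F1 : SimpleGraph β) (F2 : SimpleGraph γ) :
    Prop :=
  ∀ R : SimpleGraph α, R ≤ G → Copies R F1 Set.univ ∨ Copies (G \ R) F2 Set.univ

/-- Vertex Folkman number for a family of target graphs. -/
noncomputable def Fv {r : ℕ} {β : Fin r → Type*} (F : ∀ i, SimpleGraph (β i)) (k : ℕ) : ℕ :=
  sInf {n | ∃ G : SimpleGraph (Fin n), G.CliqueFree k ∧ VArrows G F}

/-- Two-color vertex Folkman number. -/
noncomputable def Fv2 {β γ : Type*} (F1 : SimpleGraph β) (F2 : SimpleGraph γ) (k : ℕ) : ℕ :=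
  sInf {n | ∃ G : SimpleGraph (Fin n), G.CliqueFree k ∧ VArrows2 G F1 F2}

/-- Two-color edge Folkman number. -/
noncomputable def Fe2 {β γ : Type*} (F1 : SimpleGraph β) (F2 : SimpleGraph γ) (k : ℕ) : ℕ :=
  sInf {n | ∃ G : SimpleGraph (Fin n), G.CliqueFree k ∧ EArrows2 G F1 F2}

/-- Lexicographic product `G[H]`. -/
def lexProd {α β : Type*} (G : SimpleGraph α) (H : SimpleGraph β) : SimpleGraph (α × β) where
  Adj x y := G.Adj x.1 y.1 ∨ (x.1 = y.1 ∧ H.Adj x.2 y.2)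
  symm := ⟨by rintro x y (h | ⟨e, h⟩); exacts [Or.inl h.symm, Or.inr ⟨e.symm, h.symm⟩]⟩
  loopless := ⟨by rintro x (h | ⟨_, h⟩); exacts [G.irrefl h, H.irrefl h]⟩

/-- Complete graph on `k` vertices. -/
def Kc (k : ℕ) : SimpleGraph (Fin k) := completeGraph (Fin k)

/-- `J_k = K_k - e`: complete graph on `k` vertices minus one edge (the one
joining the two distinguished right-hand vertices). -/
def Jgraph (k : ℕ) : SimpleGraph (Fin (k - 2) ⊕ Fin 2) where
  Adj x y := x ≠ y ∧ ¬(x.isRight ∧ y.isRight)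
  symm := ⟨fun x y ⟨h1, h2⟩ => ⟨h1.symm, fun ⟨a, b⟩ => h2 ⟨b, a⟩⟩⟩
  loopless := ⟨fun x h => h.1 rfl⟩

/-- Cycle on `n` vertices. -/
def cycle (n : ℕ) : SimpleGraph (ZMod n) where
  Adj i j := i ≠ j ∧ (i - j = 1 ∨ j - i = 1)
  symm := ⟨fun i j ⟨h1, h2⟩ => ⟨h1.symm, h2.symm⟩⟩
  loopless := ⟨fun i h => h.1 rfl⟩

/-- Join of two graphs: disjoint union plus all cross edges. -/
def graphJoin {α β : Type*} (G : SimpleGraph α) (H : SimpleGraph β) :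
    SimpleGraph (α ⊕ β) where
  Adj x y := (∃ a b, x = .inl a ∧ y = .inl b ∧ G.Adj a b) ∨
             (∃ a b, x = .inr a ∧ y = .inr b ∧ H.Adj a b) ∨
             (x.isLeft ∧ y.isRight) ∨ (x.isRight ∧ y.isLeft)
  symm := ⟨by
    rintro x y (⟨a, b, rfl, rfl, h⟩ | ⟨a, b, rfl, rfl, h⟩ | ⟨h1, h2⟩ | ⟨h1, h2⟩)
    · exact Or.inl ⟨b, a, rfl, rfl, h.symm⟩
    · exact Or.inr (Or.inl ⟨b, a, rfl, rfl, h.symm⟩)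
    · exact Or.inr (Or.inr (Or.inr ⟨h2, h1⟩))
    · exact Or.inr (Or.inr (Or.inl ⟨h2, h1⟩))⟩
  loopless := ⟨by
    rintro x (⟨a, b, rfl, h, h'⟩ | ⟨a, b, rfl, h, h'⟩ | ⟨h1, h2⟩ | ⟨h1, h2⟩)
    · cases h; exact G.irrefl h'
    · cases h; exact H.irrefl h'
    · cases x <;> simp_all
    · cases x <;> simp_all⟩

/-- Clique number: the largest size of a clique. -/
noncomputable def cliqueNum' {α : Type*} (G : SimpleGraph α) : ℕ :=
  sSup {n | ∃ s : Finset α, G.IsNClique n s}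

/-!
Without a red path on three vertices the red graph is a matching: every vertex has at most one
red neighbour. In `K_{a,b,c}` with `c < a + b`, the `a + b` vertices outside the part of size `c`
cannot all have a red neighbour inside it, so some vertex `u` of the first two parts has none.
Since `u` has at most one red neighbour in the other of these two parts (of size `≥ 2`), it has a
blue neighbour `o` there, and `o` has at most one red neighbour in the third part, so, as `c ≥ 3`,
it has two blue neighbours `y ≠ z` there. Then `u, o, y, z` span a blue `K_4` minus the edge `yz`.
-/

namespace SimpleGraph

variable {α : Type*}

lemma copies_univ_of_injective {β : Type*} {G : SimpleGraph α} {F : SimpleGraph β}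
    {f : β → α} (hf : Function.Injective f) (hadj : ∀ a b, F.Adj a b → G.Adj (f a) (f b)) :
    Copies G F Set.univ :=
  ⟨⟨f, hf⟩, hadj, fun _ => trivial⟩

lemma copies_jgraph_three_of_adj {G : SimpleGraph α} {v u u' : α}
    (hu : G.Adj v u) (hu' : G.Adj v u') (hne : u ≠ u') :
    Copies G (Jgraph 3) Set.univ := by
  have := hu.ne; have := hu'.ne; have := hu.symm; have := hu'.symm
  refine copies_univ_of_injective (f := Sum.elim (fun _ => v) ![u, u']) ?_ ?_ <;>
    rintro (a | a) (b | b) h <;> fin_cases a <;> fin_cases b <;> simp_all [Jgraph]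

lemma copies_jgraph_four_of_adj {G : SimpleGraph α} {w x y z : α}
    (hwx : G.Adj w x) (hwy : G.Adj w y) (hwz : G.Adj w z)
    (hxy : G.Adj x y) (hxz : G.Adj x z) (hyz : y ≠ z) :
    Copies G (Jgraph 4) Set.univ := by
  have := hwx.ne; have := hwy.ne; have := hwz.ne; have := hxy.ne; have := hxz.ne
  have := hwx.symm; have := hwy.symm; have := hwz.symm; have := hxy.symm; have := hxz.symm
  refine copies_univ_of_injective (f := Sum.elim ![w, x] ![y, z]) ?_ ?_ <;>
    rintro (a | a) (b | b) h <;> fin_cases a <;> fin_cases b <;> simp_all [Jgraph]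

lemma neighborSet_subsingleton_of_not_copies_jgraph_three {G : SimpleGraph α}
    (h : ¬Copies G (Jgraph 3) Set.univ) (v : α) : (G.neighborSet v).Subsingleton :=
  fun _ hu _ hu' => by_contra fun hne => h (copies_jgraph_three_of_adj hu hu' hne)

section Matching

variable {R : SimpleGraph α} (hR : ∀ v, (R.neighborSet v).Subsingleton)
include hR

lemma card_le_card_filter_not_adj_add_one [DecidableRel R.Adj] (v : α) (T : Finset α) :
    T.card ≤ (T.filter (¬R.Adj v ·)).card + 1 := by
  have : (T.filter (R.Adj v ·)).card ≤ 1 :=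
    Finset.card_le_one.mpr fun a ha b hb =>
      hR v (Finset.mem_filter.mp ha).2 (Finset.mem_filter.mp hb).2
  rw [← Finset.card_filter_add_card_filter_not (R.Adj v ·)]
  omega

lemma exists_mem_not_adj_of_one_lt_card (v : α) {T : Finset α} (hT : 1 < T.card) :
    ∃ y ∈ T, ¬R.Adj v y := by
  classical
  have := card_le_card_filter_not_adj_add_one hR v T
  obtain ⟨y, hy⟩ := Finset.card_pos.mp (show 0 < (T.filter (¬R.Adj v ·)).card by omega)
  exact ⟨y, (Finset.mem_filter.mp hy).1, (Finset.mem_filter.mp hy).2⟩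

lemma exists_ne_not_adj_of_two_lt_card (v : α) {T : Finset α} (hT : 2 < T.card) :
    ∃ y ∈ T, ∃ z ∈ T, y ≠ z ∧ ¬R.Adj v y ∧ ¬R.Adj v z := by
  classical
  have := card_le_card_filter_not_adj_add_one hR v T
  obtain ⟨y, hy, z, hz, hyz⟩ :=
    Finset.one_lt_card.mp (show 1 < (T.filter (¬R.Adj v ·)).card by omega)
  rw [Finset.mem_filter] at hy hz
  exact ⟨y, hy.1, z, hz.1, hyz, hy.2, hz.2⟩

lemma exists_mem_forall_not_adj_of_card_lt {S T : Finset α} (hST : T.card < S.card) :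
    ∃ u ∈ S, ∀ c ∈ T, ¬R.Adj u c := by
  by_contra! hcover
  choose! f hfT hfR using hcover
  obtain ⟨u, hu, u', hu', hne, hf⟩ := Finset.exists_ne_map_eq_of_card_lt_of_maps_to hST hfT
  exact hne (hR (f u) (hfR u hu).symm (hf ▸ (hfR u' hu').symm))

end Matching

section CompleteMultipartite

variable {ι : Type*} {V : ι → Type*} [∀ i, Fintype (V i)]

lemma copies_jgraph_four_sdiff_completeMultipartiteGraph {R : SimpleGraph (Σ i, V i)}
    (hR : ∀ v, (R.neighborSet v).Subsingleton) {u : Σ i, V i} {q r : ι}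
    (huq : u.1 ≠ q) (hur : u.1 ≠ r) (hqr : q ≠ r)
    (hq : 2 ≤ Fintype.card (V q)) (hr : 3 ≤ Fintype.card (V r))
    (hu : ∀ c : V r, ¬R.Adj u ⟨r, c⟩) :
    Copies (completeMultipartiteGraph V \ R) (Jgraph 4) Set.univ := by
  obtain ⟨o, ho, huo⟩ := exists_mem_not_adj_of_one_lt_card hR u
    (T := Finset.univ.map (Function.Embedding.sigmaMk q))
    (by rwa [Finset.card_map, Finset.card_univ])
  obtain ⟨y, hy, z, hz, hyz, hoy, hoz⟩ := exists_ne_not_adj_of_two_lt_card hR o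
    (T := Finset.univ.map (Function.Embedding.sigmaMk r))
    (by rwa [Finset.card_map, Finset.card_univ])
  simp only [Finset.mem_map, Finset.mem_univ, true_and, Function.Embedding.sigmaMk_apply]
    at ho hy hz
  obtain ⟨o, rfl⟩ := ho
  obtain ⟨y, rfl⟩ := hy
  obtain ⟨z, rfl⟩ := hz
  exact copies_jgraph_four_of_adj (w := u) (x := ⟨q, o⟩) (y := ⟨r, y⟩) (z := ⟨r, z⟩)
    ⟨huq, huo⟩ ⟨hur, hu y⟩ ⟨hur, hu z⟩ ⟨hqr, hoy⟩ ⟨hqr, hoz⟩ hyz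

theorem eArrows2_completeMultipartiteGraph_jgraph {p q r : ι}
    (hpq : p ≠ q) (hpr : p ≠ r) (hqr : q ≠ r) (hp : 2 ≤ Fintype.card (V p))
    (hq : 2 ≤ Fintype.card (V q)) (hr : 3 ≤ Fintype.card (V r))
    (hrpq : Fintype.card (V r) < Fintype.card (V p) + Fintype.card (V q)) :
    EArrows2 (completeMultipartiteGraph V) (Jgraph 3) (Jgraph 4) := by
  classical
  intro R _
  refine or_iff_not_imp_left.mpr fun hJ3 => ?_
  have hR := neighborSet_subsingleton_of_not_copies_jgraph_three hJ3
  obtain ⟨u, hu, hC⟩ := exists_mem_forall_not_adj_of_card_lt hR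
    (S := ({p, q} : Finset ι).sigma fun _ => Finset.univ)
    (T := Finset.univ.map (Function.Embedding.sigmaMk r))
    (by simpa [Finset.card_sigma, hpq] using hrpq)
  have hu_blue : ∀ c : V r, ¬R.Adj u ⟨r, c⟩ := fun c => hC _ (by simp)
  rcases (by simpa using hu : u.1 = p ∨ u.1 = q) with hup | huq
  · exact copies_jgraph_four_sdiff_completeMultipartiteGraph hR (hup ▸ hpq) (hup ▸ hpr) hqr
      hq hr hu_blue
  · exact copies_jgraph_four_sdiff_completeMultipartiteGraph hR (huq ▸ hpq.symm) (huq ▸ hqr)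
      hpr hp hr hu_blue

end CompleteMultipartite

end SimpleGraph

/-- `K_{2,2,3} → (J_3, J_4)^e`. -/
theorem K223_edge_arrows :
    EArrows2 (completeMultipartiteGraph (fun i : Fin 3 => Fin (![2, 2, 3] i)))
      (Jgraph 3) (Jgraph 4) :=
  SimpleGraph.eArrows2_completeMultipartiteGraph_jgraph (p := 0) (q := 1) (r := 2)
    (by decide) (by decide) (by decide) (by decide) (by decide) (by decide) (by decide)
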